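/- arXiv:2012.08941 — 4 statements merged into one kernel-verified Lean document; each statement's English description precedes it below -/
import Mathlib

section
/- Fix a prime p and integers n ≥ 1 and d ≥ 0. Let E(n)_e denote the free F_p-module on (e+1)-tuples (ρ_0,…,ρ_e) of permutations of {1,…,n} with no two adjacent entries equal (the degree-e normalized chains on EΣ_n). Then the F_p-linear map Ψ : E(n)_{d+n−1} → E(n)_d, defined on a basis tuple (ρ_0,…,ρ_{d+n−1}) by Ψ(ρ_0,…,ρ_{d+n−1}) = (ρ_{n−1},…,ρ_{d+n−1}) if (ρ_0(1),…,ρ_{n−1}(1)) is a permutation of (1,…,n) and the truncated tuple has no two adjacent entries equal, and Ψ(ρ_0,…,ρ_{d+n−1}) = 0 otherwise, is surjective. -/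
/-! Every basis tuple `(σ₀, …, σ_d)` has a basis preimage under `Ψ`: put `n - 1` permutations
in front of `σ₀`, the `k`-th one obtained from `σ₀` by exchanging the value `σ₀(1)` with a
chosen value `e(k)`, where `e` is a permutation of `{1, …, n}` sending `n` to `σ₀(1)`. The
values at `1` of the first `n` entries then form `e`, which is a bijection and keeps adjacent
entries distinct, and truncating gives back `(σ₀, …, σ_d)`. -/

open Function

/-- Tuples `(ρ₀, …, ρ_e)` of permutations of `{1, …, n}` with no two adjacent entries equal:
a basis for the degree `e` normalized chains on `EΣ_n`. -/
def Tup (n e : ℕ) : Type :=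
  {f : Fin (e + 1) → Equiv.Perm (Fin n) // ∀ i : Fin e, f i.castSucc ≠ f i.succ}

/-- The degree `e` normalized chains on `EΣ_n` with `F_p` coefficients: the free `F_p`-module
on nondegenerate tuples. -/
abbrev EChains (p n e : ℕ) : Type := Tup n e →₀ ZMod p

/-- The sequence `(ρ₀(1), …, ρ_{n-1}(1))` of values at `1` of the first `n` entries of a
tuple of permutations. -/
def firstVals {n d : ℕ} (hn : 1 ≤ n) (f : Tup n (d + n - 1)) : Fin n → Fin n :=
  fun k => f.val ⟨k.val, by omega⟩ ⟨0, by omega⟩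

/-- The truncated tuple `(ρ_{n-1}, …, ρ_{d+n-1})`; it automatically has no two equal
adjacent entries. -/
def truncTup {n d : ℕ} (hn : 1 ≤ n) (f : Tup n (d + n - 1)) : Tup n d :=
  ⟨fun t => f.val ⟨n - 1 + t.val, by omega⟩, by
    intro i
    have := f.property ⟨n - 1 + i.val, by omega⟩
    simpa [Fin.castSucc, Fin.succ, Fin.castAdd, Fin.castLE, Nat.add_assoc] using this⟩

open Classical in
/-- The basis values of the stabilization map `Ψ`: a tuple `(ρ₀, …, ρ_{d+n-1})` is sent to the
truncation `(ρ_{n-1}, …, ρ_{d+n-1})` if `(ρ₀(1), …, ρ_{n-1}(1))` is a permutation of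
`(1, …, n)`, and to `0` otherwise. -/
noncomputable def psiBasis (p : ℕ) {n d : ℕ} (hn : 1 ≤ n) (f : Tup n (d + n - 1)) :
    EChains p n d :=
  if Function.Bijective (firstVals hn f) then Finsupp.single (truncTup hn f) 1 else 0

/-- The stabilization map `Ψ : E(n)_{d+n-1} → E(n)_d`, extended `F_p`-linearly from its values
on basis tuples. -/
noncomputable def psi (p : ℕ) {n d : ℕ} (hn : 1 ≤ n) :
    EChains p n (d + n - 1) →ₗ[ZMod p] EChains p n d :=
  Finsupp.lift (EChains p n d) (ZMod p) (Tup n (d + n - 1)) (psiBasis p hn)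

theorem Finsupp.lift_surjective_of_forall_exists_eq_single {R M X : Type*} [Semiring R]
    {φ : M → X →₀ R} (h : ∀ x, ∃ m, φ m = Finsupp.single x 1) :
    Function.Surjective (Finsupp.lift (X →₀ R) R M φ) := by
  rw [← LinearMap.range_eq_top, eq_top_iff, ← (Finsupp.basisSingleOne (R := R)).span_eq,
    Submodule.span_le]
  rintro _ ⟨x, rfl⟩
  obtain ⟨m, hm⟩ := h x
  exact ⟨Finsupp.single m 1, by simp [hm]⟩

section Preimage

variable {n d : ℕ} (hn : 1 ≤ n) (g : Tup n d)

def psiPreimageFirstVals : Equiv.Perm (Fin n) :=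
  Equiv.swap ⟨n - 1, by omega⟩ (g.val 0 ⟨0, hn⟩)

noncomputable def psiPreimageFun (i : Fin (d + n - 1 + 1)) : Equiv.Perm (Fin n) :=
  if h : i.val < n - 1 then
    Equiv.swap (g.val 0 ⟨0, hn⟩) (psiPreimageFirstVals hn g ⟨i.val, by omega⟩) * g.val 0
  else g.val ⟨i.val - (n - 1), by omega⟩

lemma psiPreimageFun_of_le {i : Fin (d + n - 1 + 1)} (h : n - 1 ≤ i.val) :
    psiPreimageFun hn g i = g.val ⟨i.val - (n - 1), by omega⟩ :=
  dif_neg (by omega)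

lemma psiPreimageFun_apply_zero {i : Fin (d + n - 1 + 1)} (h : i.val < n) :
    psiPreimageFun hn g i ⟨0, hn⟩ = psiPreimageFirstVals hn g ⟨i.val, h⟩ := by
  unfold psiPreimageFun
  split_ifs with hi
  · exact Equiv.swap_apply_left _ _
  · have hi : i.val = n - 1 := by omega
    simp only [hi, Nat.sub_self, psiPreimageFirstVals, Equiv.swap_apply_left]
    rfl

noncomputable def psiPreimage : Tup n (d + n - 1) :=
  ⟨psiPreimageFun hn g, fun i heq => by
    by_cases hi : i.val + 1 < n
    · have h0 := congrArg (· ⟨0, hn⟩) heq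
      simp only [
        psiPreimageFun_apply_zero hn g (i := i.castSucc) (by simp only [Fin.val_castSucc]; omega),
        psiPreimageFun_apply_zero hn g (i := i.succ) (by simpa using hi),
        (psiPreimageFirstVals hn g).injective.eq_iff, Fin.ext_iff, Fin.val_castSucc,
        Fin.val_succ] at h0
      omega
    · rw [psiPreimageFun_of_le hn g (i := i.castSucc) (by simp only [Fin.val_castSucc]; omega),
        psiPreimageFun_of_le hn g (i := i.succ) (by simp only [Fin.val_succ]; omega)] at heq
      have hlt : i.val - (n - 1) < d := by omega
      refine g.property ⟨i.val - (n - 1), hlt⟩ (heq.trans (congrArg g.val ?_))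
      ext
      simp only [Fin.val_succ, Fin.succ_mk]
      omega⟩

lemma truncTup_psiPreimage : truncTup hn (psiPreimage hn g) = g := by
  refine Subtype.ext (funext fun t => ?_)
  refine (psiPreimageFun_of_le hn g (by simp)).trans (congrArg g.val (Fin.ext ?_))
  simp only [add_tsub_cancel_left]

lemma firstVals_psiPreimage : firstVals hn (psiPreimage hn g) = psiPreimageFirstVals hn g :=
  funext fun k => psiPreimageFun_apply_zero hn g k.isLt

lemma psiBasis_psiPreimage (p : ℕ) :
    psiBasis p hn (psiPreimage hn g) = Finsupp.single g 1 := by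
  rw [psiBasis, firstVals_psiPreimage, if_pos (psiPreimageFirstVals hn g).bijective,
    truncTup_psiPreimage]

end Preimage

theorem statement10_general (p : ℕ) (n d : ℕ) (hn : 1 ≤ n) :
    Function.Surjective (psi p (d := d) hn) :=
  Finsupp.lift_surjective_of_forall_exists_eq_single fun g =>
    ⟨psiPreimage hn g, psiBasis_psiPreimage hn g p⟩

/-- **Statement 10.** For a prime `p` and integers `n ≥ 1`, `d ≥ 0`, the stabilization map
`Ψ : E(n)_{d+n−1} → E(n)_d` is surjective. -/
theorem statement10 (p : ℕ) (hp : p.Prime) (n d : ℕ) (hn : 1 ≤ n) :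
    Function.Surjective (psi p (d := d) hn) :=
  statement10_general p n d hn
end

section
/- For every nonempty multi-index I = (i_1,…,i_n), the element P^I of B lies in the F_2-linear span of the set of elements P^K, where K = (k_1,…,k_n) ranges over admissible multi-indices of the same length n satisfying k_1 ≥ i_1 and k_n ≤ i_n. -/
/-! Statements about the algebra `B` of generalized Steenrod operations at `p = 2`. -/

open scoped BigOperators

/-- The generator `P^s` of the free algebra, for `s : ℤ`. -/
noncomputable def Pfree (s : ℤ) : FreeAlgebra (ZMod 2) ℤ := FreeAlgebra.ι (ZMod 2) s

/-- The mod 2 binomial coefficient `binom (s-i-1) (r-2i)`, which is zero unless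
`0 ≤ r - 2i ≤ s - i - 1`. -/
def ademCoef (r s i : ℤ) : ZMod 2 :=
  if 0 ≤ r - 2*i ∧ r - 2*i ≤ s - i - 1 then ((s - i - 1).toNat.choose (r - 2*i).toNat : ZMod 2)
  else 0

/-- The right hand side `Σ_{i ∈ ℤ} binom(s−i−1, r−2i) P^{r+s−i} P^i` of the Adem relation;
all terms with `i` outside `Finset.Icc (r - s + 1) (r / 2)` have vanishing coefficient. -/
noncomputable def ademRHS (r s : ℤ) : FreeAlgebra (ZMod 2) ℤ :=
  ∑ i ∈ Finset.Icc (r - s + 1) (r / 2), ademCoef r s i • (Pfree (r + s - i) * Pfree i)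

/-- The Adem relations: for `r < 2s`, `P^r P^s` is related to its admissible expansion. -/
inductive AdemRel : FreeAlgebra (ZMod 2) ℤ → FreeAlgebra (ZMod 2) ℤ → Prop
  | rel (r s : ℤ) (h : r < 2*s) : AdemRel (Pfree r * Pfree s) (ademRHS r s)

/-- The algebra `B` of generalized Steenrod operations at the prime 2: the quotient of the
free noncommutative `F₂`-algebra on symbols `P^s`, `s ∈ ℤ`, by the two sided ideal generated
by the Adem relations. -/
noncomputable abbrev B : Type := RingQuot AdemRel

/-- The class of a generator `P^s` in `B`. -/
noncomputable def P (s : ℤ) : B := RingQuot.mkAlgHom (ZMod 2) AdemRel (Pfree s)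

/-- The monomial `P^I = P^{i₁} ⋯ P^{iₙ}` in `B` associated to a multi-index `I`. -/
noncomputable def PI (I : List ℤ) : B := (I.map P).prod

/-- A multi-index `I = (i₁, …, iₙ)` is admissible if `iⱼ ≥ 2 i_{j+1}` for all `j`. -/
def Admissible (I : List ℤ) : Prop := I.Chain' (fun a b => 2*b ≤ a)

/-- The excess `e(I) = i₁ − i₂ − ⋯ − iₙ` of a (nonempty) multi-index. -/
def excess : List ℤ → ℤ
  | [] => 0
  | a :: l => a - l.sum

lemma PI_cons (a : ℤ) (l : List ℤ) : PI (a :: l) = P a * PI l := by simp [PI]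

lemma adem (r s : ℤ) (h : r < 2*s) :
    P r * P s = ∑ i ∈ Finset.Icc (r - s + 1) (r / 2), ademCoef r s i • (P (r + s - i) * P i) := by
  have h1 := RingQuot.mkAlgHom_rel (ZMod 2) (AdemRel.rel r s h)
  simpa [P, ademRHS, map_sum, map_smul, map_mul] using h1

lemma getLast!_cons_cons (a b : ℤ) (l : List ℤ) :
    (a :: b :: l).getLast! = (b :: l).getLast! := by
  simp [List.getLast!, List.getLast?]

/-- Upper bound for the first entry of admissible expansions of `P^j P^{K'}`. -/
def ub (j : ℤ) : List ℤ → ℤ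
  | [] => j
  | c :: _ => max j (2*c - 1)

/-- Measure for the straightening induction. -/
def meas (j : ℤ) : List ℤ → ℕ
  | [] => 0
  | c :: _ => (2*c - j).toNat

/-- Target set for the key lemma. -/
def spanSet (j : ℤ) (K' : List ℤ) : Set B :=
  {x | ∃ K : List ℤ, Admissible K ∧ K.length = K'.length + 1 ∧ j ≤ K.head! ∧
    K.head! ≤ ub j K' ∧ K.getLast! ≤ (j :: K').getLast! ∧ x = PI K}

lemma mem_spanSet_self {j : ℤ} {K' : List ℤ} (h : Admissible (j :: K')) :
    P j * PI K' ∈ Submodule.span (ZMod 2) (spanSet j K') := by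
  apply Submodule.subset_span
  refine ⟨j :: K', h, rfl, le_refl _, ?_, le_refl _, (PI_cons j K').symm⟩
  cases K' <;> simp [ub]

lemma key (μ : ℕ) : ∀ (j : ℤ) (K' : List ℤ), Admissible K' → meas j K' ≤ μ →
    P j * PI K' ∈ Submodule.span (ZMod 2) (spanSet j K') := by
  induction μ with
  | zero =>
    intro j K' hK hm
    apply mem_spanSet_self
    cases K' with
    | nil => exact List.isChain_singleton j
    | cons c t =>
      have : 2*c ≤ j := by simp [meas] at hm; omega
      exact List.isChain_cons_cons.mpr ⟨this, hK⟩
  | succ n ih =>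
    intro j K' hK hm
    cases K' with
    | nil => exact mem_spanSet_self (List.isChain_singleton j)
    | cons c t =>
      by_cases hjc : 2*c ≤ j
      · exact mem_spanSet_self (List.isChain_cons_cons.mpr ⟨hjc, hK⟩)
      · push_neg at hjc
        have hmeas : 2*c - j ≤ n + 1 := by
          have := hm; simp [meas] at this; omega
        rw [PI_cons, ← mul_assoc, adem j c (by omega), Finset.sum_mul]
        apply Submodule.sum_mem
        intro i hi
        rw [smul_mul_assoc, mul_assoc]
        apply Submodule.smul_mem
        obtain ⟨hi1, hi2'⟩ := Finset.mem_Icc.mp hi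
        have hi2 : 2*i ≤ j := by omega
        have htail : Admissible t := hK.tail
        -- inner straightening of `P i * PI t`
        have hinner : P i * PI t ∈ Submodule.span (ZMod 2) (spanSet i t) := by
          apply ih i t htail
          cases t with
          | nil => simp [meas]
          | cons d t' =>
            have hdc : 2*d ≤ c := (List.isChain_cons_cons.mp hK).1
            simp only [meas]; omega
        -- multiply on the left by `P (j + c - i)`
        have hmap : P (j + c - i) * (P i * PI t) ∈
            Submodule.map (LinearMap.mulLeft (ZMod 2) (P (j + c - i)))
              (Submodule.span (ZMod 2) (spanSet i t)) :=
          Submodule.mem_map_of_mem hinner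
        rw [Submodule.map_span] at hmap
        refine Submodule.span_le.mpr ?_ hmap
        rintro x ⟨y, ⟨L, hLadm, hLlen, hL1, hLub, hLlast, rfl⟩, rfl⟩
        simp only [LinearMap.mulLeft_apply, SetLike.mem_coe]
        -- upper bound on head of L
        have hLne : L ≠ [] := by
          intro h; rw [h] at hLlen; simp at hLlen
        obtain ⟨l1, L', rfl⟩ := List.exists_cons_of_ne_nil hLne
        have hl1 : l1 ≤ c - 1 := by
          have := hLub
          cases t with
          | nil => simp only [ub] at this; simp at this ⊢; omega
          | cons d t' =>
            have hdc : 2*d ≤ c := (List.isChain_cons_cons.mp hK).1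
            simp only [ub] at this; simp at this ⊢; omega
        have houter : P (j + c - i) * PI (l1 :: L') ∈
            Submodule.span (ZMod 2) (spanSet (j + c - i) (l1 :: L')) := by
          apply ih _ _ hLadm
          simp only [meas]
          have hh : (l1 :: L').head! = l1 := rfl
          omega
        refine Submodule.span_mono ?_ houter
        rintro x ⟨K, hKadm, hKlen, hK1, hKub, hKlast, rfl⟩
        refine ⟨K, hKadm, by simp at hKlen hLlen ⊢; omega, by omega, ?_, ?_, rfl⟩
        · -- K.head! ≤ ub j (c :: t)
          simp only [ub] at hKub ⊢
          omega
        · -- K.getLast! ≤ (j :: c :: t).getLast!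
          rw [getLast!_cons_cons] at hKlast ⊢
          cases t with
          | nil =>
            have : ((i : ℤ) :: ([] : List ℤ)).getLast! = i := rfl
            have hc : ((c : ℤ) :: ([] : List ℤ)).getLast! = c := rfl
            -- hLlast : (l1::L').getLast! ≤ (i :: []).getLast! = i
            rw [this] at hLlast
            rw [hc]
            omega
          | cons d t' =>
            rw [getLast!_cons_cons] at hLlast
            rw [getLast!_cons_cons]
            omega


/-- **Statement 11.** For every nonempty multi-index `I = (i₁,…,iₙ)`, the element `P^I` of `B`
lies in the `F₂`-linear span of the elements `P^K`, where `K = (k₁,…,kₙ)` ranges over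
admissible multi-indices of the same length `n` with `k₁ ≥ i₁` and `kₙ ≤ iₙ`. -/
theorem statement11 (I : List ℤ) (hI : I ≠ []) :
    PI I ∈ Submodule.span (ZMod 2)
      {x : B | ∃ K : List ℤ, Admissible K ∧ K.length = I.length ∧
        I.head! ≤ K.head! ∧ K.getLast! ≤ I.getLast! ∧ x = PI K} := by
  induction I with
  | nil => exact absurd rfl hI
  | cons a t ih =>
    cases t with
    | nil =>
      apply Submodule.subset_span
      exact ⟨[a], List.isChain_singleton a, rfl, le_refl _, le_refl _, rfl⟩
    | cons b t' =>
      have h1 := ih (List.cons_ne_nil b t')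
      rw [PI_cons]
      have hmap : P a * PI (b :: t') ∈
          Submodule.map (LinearMap.mulLeft (ZMod 2) (P a))
            (Submodule.span (ZMod 2)
              {x : B | ∃ K : List ℤ, Admissible K ∧ K.length = (b :: t').length ∧
                (b :: t').head! ≤ K.head! ∧ K.getLast! ≤ (b :: t').getLast! ∧ x = PI K}) :=
        Submodule.mem_map_of_mem h1
      rw [Submodule.map_span] at hmap
      refine Submodule.span_le.mpr ?_ hmap
      rintro x ⟨y, ⟨K', hadm, hlen, hhead, hlast, rfl⟩, rfl⟩
      simp only [LinearMap.mulLeft_apply, SetLike.mem_coe]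
      have hkey := key (meas a K') a K' hadm (le_refl _)
      refine Submodule.span_mono ?_ hkey
      rintro x ⟨K, hKadm, hKlen, hK1, hKub, hKlast, rfl⟩
      have hK'ne : K' ≠ [] := by
        intro h; rw [h] at hlen; simp at hlen
      obtain ⟨k1, K'', rfl⟩ := List.exists_cons_of_ne_nil hK'ne
      refine ⟨K, hKadm, by simp at hKlen hlen ⊢; omega, hK1, ?_, rfl⟩
      rw [getLast!_cons_cons] at hKlast
      rw [getLast!_cons_cons]
      exact le_trans hKlast hlast
end

section
/- For every nonempty multi-index I of length n, the element P^I of B lies in the F_2-linear span of the set of elements P^K, where K ranges over admissible multi-indices of length n with e(K) ≥ e(I). -/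
/-! Statements about the algebra `B` of generalized Steenrod operations at `p = 2`. -/

open scoped BigOperators

/-! Straighten `P^a P^L` with `L` admissible. If `2k ≤ a` for the first entry `k` of `L` there is
nothing to do. Otherwise the Adem relation turns `P^a P^k` into a sum of `P^{a+k-i} P^i` with
`2i ≤ a` and `i < k`; these keep the degree and do not lower the excess, since
`a + k - 2i ≥ a - k`. Straightening first `P^i` against the shorter tail and then `P^{a+k-i}`
against the result terminates, and induction on the length of `I` gives the theorem. -/

lemma PI_nil : PI [] = 1 := rfl

lemma P_mul_P_eq_sum {r s : ℤ} (h : r < 2 * s) :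
    P r * P s = ∑ i ∈ Finset.Icc (r - s + 1) (r / 2), ademCoef r s i • (P (r + s - i) * P i) := by
  have hrel := RingQuot.mkAlgHom_rel (ZMod 2) (AdemRel.rel r s h)
  simp only [ademRHS, map_mul, map_sum, map_smul] at hrel
  exact hrel

lemma ademCoef_ne_zero {r s i : ℤ} (h : ademCoef r s i ≠ 0) :
    0 ≤ r - 2 * i ∧ r - 2 * i ≤ s - i - 1 := by
  by_contra hc
  exact h (if_neg hc)

lemma P_mul_PI_cons_mem_of_adem {a k : ℤ} (K : List ℤ) (hak : a < 2 * k)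
    {M : Submodule (ZMod 2) B}
    (hterm : ∀ i, a - k + 1 ≤ i → 2 * i ≤ a → P (a + k - i) * (P i * PI K) ∈ M) :
    P a * PI (k :: K) ∈ M := by
  rw [PI_cons, ← mul_assoc, P_mul_P_eq_sum hak, Finset.sum_mul]
  refine M.sum_mem fun i _ => ?_
  by_cases hc : ademCoef a k i = 0
  · simp [hc]
  · obtain ⟨h₁, h₂⟩ := ademCoef_ne_zero hc
    rw [smul_mul_assoc, mul_assoc]
    exact M.smul_mem _ (hterm i (by omega) (by omega))

lemma mul_mem_of_mem_span {R A : Type*} [CommSemiring R] [Semiring A] [Algebra R A]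
    {s : Set A} {M : Submodule R A} (b : A) {x : A} (hx : x ∈ Submodule.span R s)
    (h : ∀ y ∈ s, b * y ∈ M) : b * x ∈ M :=
  (Submodule.map_span_le (LinearMap.mulLeft R b) s M).2 h ⟨x, hx, rfl⟩

/-- `c` bounds the first entry through `head?`, so that the empty multi-index satisfies every
bound; with `headI [] = 0` it would force `0 ≤ c`, which fails for negative entries. -/
def admissibleSpan (n : ℕ) (d e c : ℤ) : Submodule (ZMod 2) B :=
  Submodule.span (ZMod 2) {x | ∃ L : List ℤ, Admissible L ∧ L.length = n ∧ L.sum = d ∧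
    e ≤ excess L ∧ (∀ l ∈ L.head?, l ≤ c) ∧ x = PI L}

lemma admissibleSpan_mono {n n' : ℕ} {d d' e e' c c' : ℤ} (hn : n = n') (hd : d = d')
    (he : e' ≤ e) (hc : c ≤ c') : admissibleSpan n d e c ≤ admissibleSpan n' d' e' c' := by
  refine Submodule.span_mono ?_
  rintro _ ⟨L, hL, rfl, rfl, heL, hcL, rfl⟩
  exact ⟨L, hL, hn, hd, he.trans heL, fun l hl => (hcL l hl).trans hc, rfl⟩

lemma PI_mem_admissibleSpan {L : List ℤ} (hL : Admissible L) {c : ℤ}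
    (hc : ∀ l ∈ L.head?, l ≤ c) : PI L ∈ admissibleSpan L.length L.sum (excess L) c :=
  Submodule.subset_span ⟨L, hL, rfl, rfl, le_rfl, hc, rfl⟩

/-- The recursion is on the length `n` and, for fixed length, on `2c - a`: after an Adem step
`P^a P^k ↦ P^{a+k-i} P^i` the straightened tail `P^i P^K` starts with an entry at most `k - 1`. -/
theorem P_mul_mem_admissibleSpan (a : ℤ) {n : ℕ} {d e c : ℤ} {x : B}
    (hx : x ∈ admissibleSpan n d e c) :
    P a * x ∈ admissibleSpan (n + 1) (a + d) (a - d) (max a (2 * c - 1)) := by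
  refine mul_mem_of_mem_span _ hx ?_
  rintro _ ⟨L, hL, hn, hd, -, hc, rfl⟩
  cases L with
  | nil =>
    have h := PI_mem_admissibleSpan (List.isChain_singleton a) (c := a) (by simp)
    rw [PI_cons, PI_nil] at h
    exact admissibleSpan_mono (by simp [← hn]) (by simp [← hd]) (by simp [excess, ← hd])
      (le_max_left _ _) h
  | cons k K =>
    have hkc : k ≤ c := hc k rfl
    by_cases hka : 2 * k ≤ a
    · have h := PI_mem_admissibleSpan (List.isChain_cons_cons.2 ⟨hka, hL⟩) (c := a) (by simp)
      rw [PI_cons] at h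
      exact admissibleSpan_mono (by simpa using hn) (by simpa using hd) (by simp [excess, ← hd])
        (le_max_left _ _) h
    · refine P_mul_PI_cons_mem_of_adem K (by omega) fun i hi₁ hi₂ => ?_
      have hKhead : ∀ l ∈ K.head?, l ≤ k / 2 := by
        intro l hl
        obtain ⟨K', rfl⟩ : ∃ K', K = l :: K' := List.head?_eq_some_iff.1 hl
        have := (List.isChain_cons_cons.1 hL).1
        omega
      have hlen : K.length < n := by simp [← hn]
      have htail : P i * PI K ∈ admissibleSpan (K.length + 1) (i + K.sum) (i - K.sum) (k - 1) :=
        admissibleSpan_mono rfl rfl le_rfl (by omega)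
          (P_mul_mem_admissibleSpan i (PI_mem_admissibleSpan hL.tail hKhead))
      have hlen' : K.length + 1 = n := by simpa using hn
      have hfuel : (2 * (k - 1) - (a + k - i)).toNat < (2 * c - a).toNat := by omega
      have hsum : k + K.sum = d := by simpa using hd
      exact admissibleSpan_mono (by omega) (by omega) (by omega) (max_le (by omega) (by omega))
        (P_mul_mem_admissibleSpan (a + k - i) htail)
termination_by (n, (2 * c - a).toNat)
decreasing_by
  · exact Prod.Lex.left _ _ hlen
  · rw [← hlen']; exact Prod.Lex.right _ hfuel

lemma exists_PI_mem_admissibleSpan (I : List ℤ) :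
    ∃ c, PI I ∈ admissibleSpan I.length I.sum (excess I) c := by
  induction I with
  | nil => exact ⟨0, PI_mem_admissibleSpan List.isChain_nil (by simp)⟩
  | cons a J ih =>
    obtain ⟨c, hc⟩ := ih
    exact ⟨_, by simpa [PI_cons, excess] using P_mul_mem_admissibleSpan a hc⟩

theorem statement12_general (I : List ℤ) :
    PI I ∈ Submodule.span (ZMod 2)
      {x : B | ∃ K : List ℤ, Admissible K ∧ K.length = I.length ∧
        excess I ≤ excess K ∧ x = PI K} := by
  obtain ⟨c, hc⟩ := exists_PI_mem_admissibleSpan I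
  refine Submodule.span_mono ?_ hc
  rintro _ ⟨K, hK, hlen, -, hexc, -, rfl⟩
  exact ⟨K, hK, hlen, hexc, rfl⟩

/-- **Statement 12.** For every nonempty multi-index `I` of length `n`, the element `P^I` of `B`
lies in the `F₂`-linear span of the elements `P^K`, where `K` ranges over admissible
multi-indices of length `n` with `e(K) ≥ e(I)`. -/
theorem statement12 (I : List ℤ) (hI : I ≠ []) :
    PI I ∈ Submodule.span (ZMod 2)
      {x : B | ∃ K : List ℤ, Admissible K ∧ K.length = I.length ∧
        excess I ≤ excess K ∧ x = PI K} :=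
  statement12_general I
end

section
/- Let A be an abelian group and n, p ≥ 0. Define a map Z^n(Δ_p; A) → Z^{n+1}(Δ_{p+1}; A) sending a normalized n-cocycle α to the cochain β given on an (n+1)-simplex θ : [n+1] → [p+1] of Δ_{p+1} by: β(θ) = α(θ′) if θ(0) = 0 and θ(1) ≥ 1, where θ′ : [n] → [p] is defined by θ′(i) = θ(i+1) − 1; and β(θ) = 0 otherwise. Then β is indeed a normalized (n+1)-cocycle, and this map is a bijection from Z^n(Δ_p; A) onto the set of β ∈ Z^{n+1}(Δ_{p+1}; A) whose pullback along the 0th coface map d^0 : Δ_p → Δ_{p+1} is zero. (This is the statement that the structure maps K(A,n) → Ω K(A,n+1) of the Eilenberg–MacLane spectrum are isomorphisms.) -/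
/-! Statement 16: the structure maps `K(A,n) → Ω K(A,n+1)` of the Eilenberg–MacLane spectrum
are isomorphisms, expressed in terms of normalized simplicial cocycles on standard simplices. -/

open Function

/-- The `m`-simplices of the standard `p`-simplex `Δ_p`: order-preserving maps `[m] → [p]`. -/
abbrev Smp (m p : ℕ) : Type := Fin (m + 1) →o Fin (p + 1)

/-- The `i`-th coface map `δ_i : [m] → [m+1]`, as an order-preserving map. -/
def coface {m : ℕ} (i : Fin (m + 2)) : Fin (m + 1) →o Fin (m + 2) :=
  (Fin.succAboveOrderEmb i).toOrderHom

variable {A : Type} [AddCommGroup A]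

/-- The simplicial coboundary of an `m`-cochain on `Δ_p`:
`(dα)(θ) = Σ_{i=0}^{m+1} (−1)^i α(d_i θ)`. -/
def cobdry {m p : ℕ} (α : Smp m p → A) : Smp (m + 1) p → A :=
  fun θ => ∑ i : Fin (m + 2), ((-1 : ℤ) ^ (i : ℕ)) • α (θ.comp (coface i))

/-- A cochain is normalized if it vanishes on degenerate (non-injective) simplices. -/
def IsNorm {m p : ℕ} (α : Smp m p → A) : Prop := ∀ θ : Smp m p, ¬ Injective θ → α θ = 0

/-- The set `Z^m(Δ_p; A)` of normalized `m`-cocycles on `Δ_p`. -/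
def Zset (A : Type) [AddCommGroup A] (m p : ℕ) : Set (Smp m p → A) :=
  {α | IsNorm α ∧ ∀ θ : Smp (m + 1) p, cobdry α θ = 0}

/-- The map `[n] → [p]`, `i ↦ θ(i+1) − 1`, associated to `θ : [n+1] → [p+1]`
(with truncated subtraction). -/
def shrink {n p : ℕ} (θ : Smp (n + 1) (p + 1)) : Smp n p where
  toFun i := ⟨(θ i.succ : ℕ) - 1, by have := (θ i.succ).isLt; omega⟩
  monotone' := by
    intro i j hij
    simp only [Fin.mk_le_mk]
    exact Nat.sub_le_sub_right (θ.monotone (Fin.succ_le_succ_iff.mpr hij)) 1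

/-- The structure map: a normalized `n`-cocycle `α` on `Δ_p` is sent to the `(n+1)`-cochain
`β` on `Δ_{p+1}` with `β(θ) = α(θ′)` if `θ(0) = 0` and `θ(1) ≥ 1` (where `θ′(i) = θ(i+1) − 1`),
and `β(θ) = 0` otherwise. -/
def emStruc {n p : ℕ} (α : Smp n p → A) : Smp (n + 1) (p + 1) → A :=
  fun θ => if θ 0 = 0 ∧ θ 1 ≠ 0 then α (shrink θ) else 0

/-!
The cone `σ ↦ 0 ⋆ σ` identifies the `n`-simplices of `Δ_p` with the `(n+1)`-simplices `θ` of
`Δ_{p+1}` with `θ 0 = 0 < θ 1`, and `emStruc α` is `α` transported along it and extended by zero.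
The faces of a cone are `d⁰σ` and the cones on the faces of `σ`, so
`dβ(0 ⋆ σ) = β(d⁰σ) − d(β ∘ cone)(σ)`, which gives the cocycle conditions in both directions.
Every other simplex either factors through `d⁰` or is degenerate, so a normalized cocycle that
vanishes on the image of `d⁰` is determined by its values on cones.
-/

lemma map_ne_zero_of_le {m p : ℕ} (θ : Smp m p) {a b : Fin (m + 1)} (hab : a ≤ b)
    (ha : θ a ≠ 0) : θ b ≠ 0 :=
  fun hb => ha (Fin.le_zero_iff.mp ((θ.monotone hab).trans_eq hb))

lemma exists_coface_zero_comp_eq {m p : ℕ} (θ : Smp m (p + 1)) (h0 : θ 0 ≠ 0) :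
    ∃ φ : Smp m p, (coface 0).comp φ = θ := by
  have hθ (i : Fin (m + 1)) : θ i ≠ 0 := map_ne_zero_of_le θ (Fin.zero_le i) h0
  refine ⟨⟨fun i => (θ i).pred (hθ i), fun i j hij => Fin.pred_le_pred_iff.mpr (θ.monotone hij)⟩,
    ?_⟩
  ext i : 2
  exact Fin.succ_pred _ (hθ i)

lemma comp_coface_zero_eq_comp_coface_one {m p : ℕ} (θ : Smp (m + 1) p) (h : θ 0 = θ 1) :
    θ.comp (coface 0) = θ.comp (coface 1) := by
  ext j : 2
  cases j using Fin.cases with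
  | zero => exact h.symm
  | succ k => simp [coface]

def cone {m p : ℕ} (σ : Smp m p) : Smp (m + 1) (p + 1) where
  toFun := Fin.cases 0 fun k => (σ k).succ
  monotone' i j hij := by
    cases i using Fin.cases with
    | zero => exact Fin.zero_le _
    | succ a =>
      cases j using Fin.cases with
      | zero => exact absurd hij (Fin.succ_pos a).not_ge
      | succ b => simpa using σ.monotone (Fin.succ_le_succ_iff.mp hij)

@[simp] lemma cone_zero {m p : ℕ} (σ : Smp m p) : cone σ 0 = 0 := rfl

@[simp] lemma cone_succ {m p : ℕ} (σ : Smp m p) (k : Fin (m + 1)) :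
    cone σ k.succ = (σ k).succ := rfl

lemma cone_one_ne_zero {m p : ℕ} (σ : Smp m p) : cone σ 1 ≠ 0 :=
  Fin.succ_ne_zero _

lemma injective_cone_iff {m p : ℕ} (σ : Smp m p) : Injective (cone σ) ↔ Injective σ := by
  refine ⟨fun h a b hab => Fin.succ_injective _ (h (by simp [hab])), fun h a b hab => ?_⟩
  cases a using Fin.cases <;> cases b using Fin.cases
  · rfl
  · exact absurd hab.symm (Fin.succ_ne_zero _)
  · exact absurd hab (Fin.succ_ne_zero _)
  · simpa using h (Fin.succ_injective _ hab)

lemma shrink_cone {m p : ℕ} (σ : Smp m p) : shrink (cone σ) = σ := by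
  ext i : 2
  simp [shrink]

lemma cone_shrink {m p : ℕ} (θ : Smp (m + 1) (p + 1)) (h0 : θ 0 = 0) (h1 : θ 1 ≠ 0) :
    cone (shrink θ) = θ := by
  ext i : 2
  cases i using Fin.cases with
  | zero => simp [h0]
  | succ k =>
    have : (θ k.succ : ℕ) ≠ 0 :=
      Fin.val_ne_zero_iff.mpr (map_ne_zero_of_le θ (Fin.succ_le_succ_iff.mpr (Fin.zero_le k)) h1)
    apply Fin.ext
    change (θ k.succ : ℕ) - 1 + 1 = θ k.succ
    omega

lemma cone_comp_coface_zero {m p : ℕ} (σ : Smp (m + 1) p) :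
    (cone σ).comp (coface 0) = (coface 0).comp σ := by
  ext j : 2
  simp [coface]

lemma cone_comp_coface_succ {m p : ℕ} (σ : Smp (m + 1) p) (i : Fin (m + 2)) :
    (cone σ).comp (coface i.succ) = cone (σ.comp (coface i)) := by
  ext j : 2
  cases j using Fin.cases <;> simp [coface]

lemma cobdry_cone {m p : ℕ} (β : Smp (m + 1) (p + 1) → A) (σ : Smp (m + 1) p) :
    cobdry β (cone σ) = β ((coface 0).comp σ) - cobdry (fun τ => β (cone τ)) σ := by
  simp only [cobdry, Fin.sum_univ_succ (n := m + 2), cone_comp_coface_zero, cone_comp_coface_succ,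
    Fin.val_zero, pow_zero, one_smul, Fin.val_succ, pow_succ, mul_neg_one, neg_smul,
    Finset.sum_neg_distrib, sub_eq_add_neg]

lemma emStruc_cone {m p : ℕ} (α : Smp m p → A) (σ : Smp m p) : emStruc α (cone σ) = α σ := by
  rw [emStruc, if_pos ⟨cone_zero σ, cone_one_ne_zero σ⟩, shrink_cone]

lemma emStruc_of_map_zero_ne_zero {m p : ℕ} (α : Smp m p → A) {θ : Smp (m + 1) (p + 1)}
    (h0 : θ 0 ≠ 0) : emStruc α θ = 0 :=
  if_neg fun h => h0 h.1

lemma emStruc_coface_zero_comp {m p : ℕ} (α : Smp m p → A) (φ : Smp (m + 1) p) :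
    emStruc α ((coface 0).comp φ) = 0 :=
  emStruc_of_map_zero_ne_zero α (Fin.succ_ne_zero _)

lemma isNorm_emStruc {m p : ℕ} {α : Smp m p → A} (hα : IsNorm α) : IsNorm (emStruc α) := by
  intro θ hθ
  by_cases h : θ 0 = 0 ∧ θ 1 ≠ 0
  · rw [← cone_shrink θ h.1 h.2, emStruc_cone]
    rw [← cone_shrink θ h.1 h.2, injective_cone_iff] at hθ
    exact hα _ hθ
  · exact if_neg h

lemma cobdry_emStruc {m p : ℕ} {α : Smp m p → A} (hα : ∀ ψ, cobdry α ψ = 0)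
    (θ : Smp (m + 2) (p + 1)) : cobdry (emStruc α) θ = 0 := by
  by_cases h0 : θ 0 = 0
  · by_cases h1 : θ 1 = 0
    · -- the faces `d₀θ = d₁θ` cancel, and the other faces are not cones
      have hface (i : Fin (m + 1)) : emStruc α (θ.comp (coface i.succ.succ)) = 0 :=
        if_neg fun h => h.2 (by simpa [coface] using h1)
      simp [cobdry, Fin.sum_univ_succ, hface,
        comp_coface_zero_eq_comp_coface_one θ (h0.trans h1.symm)]
    · rw [← cone_shrink θ h0 h1, cobdry_cone, emStruc_coface_zero_comp]
      simp only [emStruc_cone, hα, sub_zero]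
  · exact Finset.sum_eq_zero fun i _ => by
      rw [emStruc_of_map_zero_ne_zero α (map_ne_zero_of_le θ (Fin.zero_le _) h0), smul_zero]

lemma emStruc_comp_cone {m p : ℕ} {β : Smp (m + 1) (p + 1) → A} (hβ : IsNorm β)
    (hβ0 : ∀ φ : Smp (m + 1) p, β ((coface 0).comp φ) = 0) :
    emStruc (fun σ => β (cone σ)) = β := by
  funext θ
  by_cases h : θ 0 = 0 ∧ θ 1 ≠ 0
  · rw [emStruc, if_pos h, cone_shrink θ h.1 h.2]
  rw [emStruc, if_neg h]
  by_cases h0 : θ 0 = 0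
  · have h1 : θ 1 = θ 0 := h0 ▸ not_not.mp fun h1 => h ⟨h0, h1⟩
    exact (hβ θ fun hθ => Fin.zero_ne_one' (hθ h1.symm)).symm
  · obtain ⟨φ, rfl⟩ := exists_coface_zero_comp_eq θ h0
    exact (hβ0 φ).symm

/-- **Statement 16.** The map `α ↦ β` above is well defined (i.e. sends normalized `n`-cocycles
on `Δ_p` to normalized `(n+1)`-cocycles on `Δ_{p+1}`) and is a bijection from
`Z^n(Δ_p; A)` onto the set of `β ∈ Z^{n+1}(Δ_{p+1}; A)` whose pullback along the `0`-th coface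
map `d^0 : Δ_p → Δ_{p+1}` is zero. -/
theorem statement16 (A : Type) [AddCommGroup A] (n p : ℕ) :
    Set.BijOn (emStruc (A := A)) (Zset A n p)
      {β ∈ Zset A (n + 1) (p + 1) | ∀ φ : Smp (n + 1) p,
        β ((coface (0 : Fin (p + 2))).comp φ) = 0} := by
  refine ⟨?mapsTo, ?injOn, ?surjOn⟩
  case mapsTo =>
    rintro α ⟨hnorm, hcoc⟩
    exact ⟨⟨isNorm_emStruc hnorm, cobdry_emStruc hcoc⟩, emStruc_coface_zero_comp α⟩
  case injOn =>
    intro α _ α' _ h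
    funext σ
    simpa only [emStruc_cone] using congrFun h (cone σ)
  case surjOn =>
    rintro β ⟨⟨hnorm, hcoc⟩, hβ0⟩
    refine ⟨fun σ => β (cone σ), ⟨?_, fun ψ => ?_⟩, emStruc_comp_cone hnorm hβ0⟩
    · exact fun σ hσ => hnorm _ (mt (injective_cone_iff σ).mp hσ)
    · simpa [cobdry_cone, hβ0] using hcoc (cone ψ)
end
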